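/- Let β ∈ (0,1] and define the stochastic viability kernel Viab_β(t₀) as the set of initial states x₀ for which there exists an admissible feedback u with P(x(t) ∈ A(t) for t = t₀,...,T) ≥ β. Then x₀ ∈ Viab_β(t₀) if and only if V(t₀,x₀) ≥ β, where V is the dynamic programming value function defined by V(T,x) = 1_{A(T)}(x) and V(t,x) = max_{u ∈ B(t,x)} E_μ[1_{A(t)}(x) V(t+1, f(t,x,u,ω))]. -/
import Mathlib


open Finset Filter
open scoped Classical BigOperators

/-- State after evolving `k` steps from `x` at time `t` under feedback `u` and scenario `ω`. -/
def traj {X U W : Type*} (f : ℕ → X → U → W → X) (u : ℕ → X → U) (ω : ℕ → W) :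
    ℕ → X → ℕ → X
  | _, x, 0 => x
  | t, x, k + 1 => traj f u ω (t + 1) (f t x (u t x) (ω t)) k

/-- Probability, under the product law of the i.i.d. noise with marginal `μ`, that the
closed-loop trajectory starting from `x0` at time `t0` under feedback `u` satisfies the
state constraints `A s` for all `s = t0, …, T`. -/
noncomputable def viabProb {X U W : Type*} [Fintype W] [Inhabited W]
    (f : ℕ → X → U → W → X) (A : ℕ → Set X) (μ : W → ℝ) (T : ℕ)
    (u : ℕ → X → U) (t0 : ℕ) (x0 : X) : ℝ :=
  ∑ ω : Fin T → W, (∏ i, μ (ω i)) *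
    (if ∀ s ∈ Finset.Icc t0 T,
        traj f u (fun n => if h : n < T then ω ⟨n, h⟩ else default) t0 x0 (s - t0) ∈ A s
      then (1 : ℝ) else 0)

lemma traj_congr {X U W : Type*} (f : ℕ → X → U → W → X) (u : ℕ → X → U) (ω ω' : ℕ → W) :
    ∀ (k t : ℕ) (x : X), (∀ n, t ≤ n → n < t + k → ω n = ω' n) →
      traj f u ω t x k = traj f u ω' t x k
  | 0, t, x, _ => rfl
  | (k+1), t, x, h => by
      show traj f u ω (t+1) (f t x (u t x) (ω t)) k
          = traj f u ω' (t+1) (f t x (u t x) (ω' t)) k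
      rw [h t le_rfl (by omega)]
      exact traj_congr f u ω ω' k (t+1) _ (fun n h1 h2 => h n (by omega) (by omega))

lemma sum_split {W : Type*} [Fintype W] {T : ℕ} (μ : W → ℝ) (hmu1 : ∑ w, μ w = 1)
    (j : Fin T) (g : W → (Fin T → W) → ℝ)
    (hg : ∀ w ω w', g w (Function.update ω j w') = g w ω) :
    ∑ ω : Fin T → W, (∏ i, μ (ω i)) * g (ω j) ω
      = ∑ w, μ w * ∑ ω : Fin T → W, (∏ i, μ (ω i)) * g w ω := by
  classical
  set F : W × (Fin T → W) → ℝ := fun p => μ p.1 * ((∏ i, μ (p.2 i)) * g p.1 p.2) with hF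
  set φ : W × (Fin T → W) → W × (Fin T → W) :=
    fun p => (p.2 j, Function.update p.2 j p.1) with hφ
  have hinv : Function.Involutive φ := by
    intro p
    simp [hφ, Function.update_idem, Function.update_eq_self]
  have hsum : ∑ p : W × (Fin T → W), F (φ p) = ∑ p, F p :=
    Fintype.sum_bijective φ hinv.bijective _ _ (fun p => rfl)
  -- compute F (φ p)
  have hFφ : ∀ p : W × (Fin T → W),
      F (φ p) = μ p.1 * ((∏ i, μ (p.2 i)) * g (p.2 j) p.2) := by
    intro ⟨w, ω⟩
    have h1 : ∏ i, μ (Function.update ω j w i)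
        = μ w * ∏ i ∈ univ \ {j}, μ (ω i) := by
      have := Finset.prod_update_of_mem (mem_univ j) (fun i => μ (ω i)) (μ w)
      rw [← this]
      exact Finset.prod_congr rfl fun i _ =>
        (Function.apply_update (fun _ v => μ v) ω j w i)
    have h2 : (∏ i, μ (ω i)) = μ (ω j) * ∏ i ∈ univ \ {j}, μ (ω i) := by
      rw [← Finset.prod_update_of_mem (mem_univ j), Function.update_eq_self]
    simp only [hF, hφ, hg, h1, h2]
    ring
  rw [funext hFφ] at hsum
  calc ∑ ω : Fin T → W, (∏ i, μ (ω i)) * g (ω j) ω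
      = ∑ w, μ w * ∑ ω : Fin T → W, (∏ i, μ (ω i)) * g (ω j) ω := by
        rw [← Finset.sum_mul, hmu1, one_mul]
    _ = ∑ p : W × (Fin T → W), μ p.1 * ((∏ i, μ (p.2 i)) * g (p.2 j) p.2) := by
        rw [Fintype.sum_prod_type]
        simp [Finset.mul_sum]
    _ = ∑ p : W × (Fin T → W), F p := hsum
    _ = ∑ w, μ w * ∑ ω : Fin T → W, (∏ i, μ (ω i)) * g w ω := by
        rw [Fintype.sum_prod_type]
        simp [hF, Finset.mul_sum]

lemma viabProb_top {X U W : Type*} [Fintype W] [Inhabited W]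
    (f : ℕ → X → U → W → X) (A : ℕ → Set X) (μ : W → ℝ) (hmu1 : ∑ w, μ w = 1)
    (T : ℕ) (u : ℕ → X → U) (x : X) :
    viabProb f A μ T u T x = if x ∈ A T then (1 : ℝ) else 0 := by
  unfold viabProb
  have h : ∀ ω : Fin T → W,
      (if ∀ s ∈ Finset.Icc T T,
          traj f u (fun n => if h : n < T then ω ⟨n, h⟩ else default) T x (s - T) ∈ A s
        then (1 : ℝ) else 0) = if x ∈ A T then (1 : ℝ) else 0 := by
    intro ω
    congr 1
    simp only [Finset.Icc_self, Finset.mem_singleton, eq_iff_iff]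
    constructor
    · intro hh; have := hh T rfl; simpa [Nat.sub_self, traj] using this
    · intro hh s hs; subst hs; simpa [Nat.sub_self, traj] using hh
  simp only [h, ← Finset.sum_mul]
  have : ∑ ω : Fin T → W, ∏ i, μ (ω i) = 1 := by
    rw [← Fintype.prod_sum (fun _ : Fin T => μ)]
    simp [hmu1]
  rw [this, one_mul]

lemma viabProb_rec {X U W : Type*} [Fintype W] [Inhabited W]
    (f : ℕ → X → U → W → X) (A : ℕ → Set X) (μ : W → ℝ) (hmu1 : ∑ w, μ w = 1)
    (T : ℕ) (u : ℕ → X → U) (t : ℕ) (ht : t < T) (x : X) :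
    viabProb f A μ T u t x = (if x ∈ A t then (1 : ℝ) else 0) *
      ∑ w, μ w * viabProb f A μ T u (t + 1) (f t x (u t x) w) := by
  classical
  set j : Fin T := ⟨t, ht⟩ with hj
  set ext : (Fin T → W) → ℕ → W :=
    fun ω n => if h : n < T then ω ⟨n, h⟩ else default with hext
  set G : W → (Fin T → W) → ℝ := fun w ω =>
    if ∀ s ∈ Finset.Icc (t + 1) T,
        traj f u (ext ω) (t + 1) (f t x (u t x) w) (s - (t + 1)) ∈ A s
      then (1 : ℝ) else 0 with hG
  -- the indicator splits
  have hsplit : ∀ ω : Fin T → W,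
      (if ∀ s ∈ Finset.Icc t T, traj f u (ext ω) t x (s - t) ∈ A s
        then (1 : ℝ) else 0)
      = (if x ∈ A t then (1 : ℝ) else 0) * G (ω j) ω := by
    intro ω
    have hωt : ext ω t = ω j := by simp [hext, hj, ht]
    have hIcc : Finset.Icc t T = insert t (Finset.Icc (t + 1) T) := by
      rw [Finset.Icc_add_one_left_eq_Ioc, Finset.Icc_eq_cons_Ioc (le_of_lt ht), Finset.cons_eq_insert]
    have htraj : ∀ s ∈ Finset.Icc (t + 1) T,
        traj f u (ext ω) t x (s - t)
          = traj f u (ext ω) (t + 1) (f t x (u t x) (ω j)) (s - (t + 1)) := by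
      intro s hs
      rw [Finset.mem_Icc] at hs
      have h1 : s - t = (s - (t + 1)) + 1 := by omega
      rw [h1, ← hωt]
      rfl
    have : (∀ s ∈ Finset.Icc t T, traj f u (ext ω) t x (s - t) ∈ A s)
        ↔ (x ∈ A t ∧ ∀ s ∈ Finset.Icc (t + 1) T,
            traj f u (ext ω) (t + 1) (f t x (u t x) (ω j)) (s - (t + 1)) ∈ A s) := by
      rw [hIcc]
      constructor
      · intro h
        refine ⟨by simpa [traj] using h t (Finset.mem_insert_self _ _), fun s hs => ?_⟩
        rw [← htraj s hs]
        exact h s (Finset.mem_insert_of_mem hs)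
      · rintro ⟨h0, h1⟩ s hs
        rcases Finset.mem_insert.mp hs with rfl | hs
        · simpa [traj] using h0
        · rw [htraj s hs]; exact h1 s hs
    rw [if_congr this rfl rfl, hG]
    by_cases hx : x ∈ A t <;> simp [hx]
  -- G w does not depend on the j-th coordinate
  have hGindep : ∀ w ω w', G w (Function.update ω j w') = G w ω := by
    intro w ω w'
    simp only [hG]
    congr 1
    simp only [eq_iff_iff]
    have hagree : ∀ s ∈ Finset.Icc (t + 1) T,
        traj f u (ext (Function.update ω j w')) (t + 1) (f t x (u t x) w) (s - (t + 1))
          = traj f u (ext ω) (t + 1) (f t x (u t x) w) (s - (t + 1)) := by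
      intro s hs
      rw [Finset.mem_Icc] at hs
      apply traj_congr
      intro n hn1 hn2
      have hnt : n ≠ t := by omega
      simp only [hext]
      split
      · next h =>
          exact Function.update_of_ne (by simpa [hj, Fin.ext_iff] using hnt) _ _
      · rfl
    constructor
    · intro h s hs; rw [← hagree s hs]; exact h s hs
    · intro h s hs; rw [hagree s hs]; exact h s hs
  -- put everything together
  unfold viabProb
  show ∑ ω : Fin T → W, (∏ i, μ (ω i)) *
      (if ∀ s ∈ Finset.Icc t T, traj f u (ext ω) t x (s - t) ∈ A s then (1:ℝ) else 0) = _
  calc ∑ ω : Fin T → W, (∏ i, μ (ω i)) *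
        (if ∀ s ∈ Finset.Icc t T, traj f u (ext ω) t x (s - t) ∈ A s then (1:ℝ) else 0)
      = ∑ ω : Fin T → W, (∏ i, μ (ω i)) *
          ((if x ∈ A t then (1:ℝ) else 0) * G (ω j) ω) := by
        exact Finset.sum_congr rfl fun ω _ => by rw [hsplit ω]
    _ = (if x ∈ A t then (1:ℝ) else 0) *
          ∑ ω : Fin T → W, (∏ i, μ (ω i)) * G (ω j) ω := by
        rw [Finset.mul_sum]; exact Finset.sum_congr rfl fun ω _ => by ring
    _ = (if x ∈ A t then (1:ℝ) else 0) *
          ∑ w, μ w * ∑ ω : Fin T → W, (∏ i, μ (ω i)) * G w ω := by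
        rw [sum_split μ hmu1 j G hGindep]
    _ = (if x ∈ A t then (1:ℝ) else 0) *
          ∑ w, μ w * viabProb f A μ T u (t + 1) (f t x (u t x) w) := rfl

lemma viab_le_V {X U W : Type*} [Fintype W] [Inhabited W]
    (f : ℕ → X → U → W → X) (B : ℕ → X → Finset U) (A : ℕ → Set X)
    (μ : W → ℝ) (hmu0 : ∀ w, 0 ≤ μ w) (hmu1 : ∑ w, μ w = 1) (T : ℕ)
    (hB : ∀ t x, (B t x).Nonempty) (V : ℕ → X → ℝ)
    (hVT : ∀ x, V T x = if x ∈ A T then (1 : ℝ) else 0)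
    (hV : ∀ t, t < T → ∀ x,
      V t x = (B t x).sup' (hB t x)
        (fun u => (if x ∈ A t then (1 : ℝ) else 0) * ∑ w, μ w * V (t + 1) (f t x u w)))
    (u : ℕ → X → U) (hu : ∀ t x, u t x ∈ B t x) :
    ∀ (k t : ℕ), t + k = T → ∀ x, viabProb f A μ T u t x ≤ V t x := by
  intro k
  induction k with
  | zero =>
    intro t htk x
    subst htk
    simp only [Nat.add_zero] at *
    rw [viabProb_top f A μ hmu1 _ u x, hVT]
  | succ k ih =>
    intro t htk x
    have ht : t < T := by omega
    rw [viabProb_rec f A μ hmu1 T u t ht x, hV t ht x]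
    have step : (if x ∈ A t then (1:ℝ) else 0) *
        ∑ w, μ w * viabProb f A μ T u (t + 1) (f t x (u t x) w)
        ≤ (if x ∈ A t then (1:ℝ) else 0) *
        ∑ w, μ w * V (t + 1) (f t x (u t x) w) := by
      apply mul_le_mul_of_nonneg_left _ (by positivity)
      apply Finset.sum_le_sum
      intro w _
      exact mul_le_mul_of_nonneg_left (ih (t + 1) (by omega) _) (hmu0 w)
    exact le_trans step (Finset.le_sup' (fun v => (if x ∈ A t then (1:ℝ) else 0) * ∑ w, μ w * V (t + 1) (f t x v w)) (hu t x))

theorem stochastic_viability_kernel_eq_value_level_set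
    {X U W : Type*} [Fintype W] [Inhabited W]
    (f : ℕ → X → U → W → X) (B : ℕ → X → Finset U) (A : ℕ → Set X)
    (μ : W → ℝ) (hmu0 : ∀ w, 0 ≤ μ w) (hmu1 : ∑ w, μ w = 1) (T : ℕ)
    (hB : ∀ t x, (B t x).Nonempty)
    (V : ℕ → X → ℝ)
    (hVT : ∀ x, V T x = if x ∈ A T then (1 : ℝ) else 0)
    (hV : ∀ t, t < T → ∀ x,
      V t x = (B t x).sup' (hB t x)
        (fun u => (if x ∈ A t then (1 : ℝ) else 0) * ∑ w, μ w * V (t + 1) (f t x u w)))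
    (β : ℝ) (hβ0 : 0 < β) (hβ1 : β ≤ 1)
    (t0 : ℕ) (ht0 : t0 ≤ T) (x0 : X) :
    (∃ u : ℕ → X → U, (∀ t x, u t x ∈ B t x) ∧
        β ≤ viabProb f A μ T u t0 x0) ↔ β ≤ V t0 x0 := by
  classical
  constructor
  · rintro ⟨u, hu, hβu⟩
    exact le_trans hβu
      (viab_le_V f B A μ hmu0 hmu1 T hB V hVT hV u hu (T - t0) t0 (by omega) x0)
  · intro hβV
    -- optimal feedback
    set uopt : ℕ → X → U := fun t x =>
      if h : t < T then
        (Finset.exists_mem_eq_sup' (hB t x)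
          (fun v => (if x ∈ A t then (1 : ℝ) else 0) *
            ∑ w, μ w * V (t + 1) (f t x v w))).choose
      else (hB t x).choose with huopt
    have huB : ∀ t x, uopt t x ∈ B t x := by
      intro t x
      by_cases h : t < T
      · simp only [huopt, dif_pos h]
        exact (Finset.exists_mem_eq_sup' (hB t x) _).choose_spec.1
      · simp only [huopt, dif_neg h]
        exact (hB t x).choose_spec
    have hopt : ∀ t, t < T → ∀ x,
        V t x = (if x ∈ A t then (1 : ℝ) else 0) *
          ∑ w, μ w * V (t + 1) (f t x (uopt t x) w) := by
      intro t ht x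
      rw [hV t ht x]
      have := (Finset.exists_mem_eq_sup' (hB t x)
          (fun v => (if x ∈ A t then (1 : ℝ) else 0) *
            ∑ w, μ w * V (t + 1) (f t x v w))).choose_spec.2
      simp only [huopt, dif_pos ht]
      exact this
    have heq : ∀ (k t : ℕ), t + k = T → ∀ x, viabProb f A μ T uopt t x = V t x := by
      intro k
      induction k with
      | zero =>
        intro t htk x
        subst htk
        simp only [Nat.add_zero] at *
        rw [viabProb_top f A μ hmu1 _ uopt x, hVT]
      | succ k ih =>
        intro t htk x
        have ht : t < T := by omega
        rw [viabProb_rec f A μ hmu1 T uopt t ht x, hopt t ht x]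
        congr 1
        exact Finset.sum_congr rfl fun w _ => by rw [ih (t + 1) (by omega)]
    exact ⟨uopt, huB, by rw [heq (T - t0) t0 (by omega) x0]; exact hβV⟩
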